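/- If j = j(n) → ∞ with j/n → ρ for fixed 0 < ρ < 1, then for each m ≥ 0, P{X_{n,j} - 1 = m} → binom(m - 1/(k+1), m)·ρ^{k/(k+1)}·(1-ρ)^m; i.e., X_{n,j} - 1 converges in distribution to a negative binomial distribution NegBin(k/(k+1), ρ). -/

import Mathlib

open Filter

/-- Generalized binomial coefficient `binom(x, n) = x(x-1)⋯(x-n+1)/n!`. -/
noncomputable def gbinom (x : ℝ) (n : ℕ) : ℝ :=
  (∏ i ∈ Finset.range n, (x - i)) / (Nat.factorial n)

/-- `P{X_{n,j} = m}`: the exact distribution of the number of descendants of node `j`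
in a random ordered increasing `k`-tree of size `n` (for `m ≥ 1`; zero if `m+j > n+1`). -/
noncomputable def Pdesc (k n j m : ℕ) : ℝ :=
  if m + j ≤ n + 1 then
    gbinom ((m : ℝ) - 1 - 1 / ((k : ℝ) + 1)) (m - 1)
      * gbinom ((n : ℝ) - m - 1 + 2 / ((k : ℝ) + 1)) (n - m - j + 1)
      / gbinom ((n : ℝ) - k / ((k : ℝ) + 1)) (n - j)
  else 0

/-!
Put `b = 1/(k+1)`. Every generalized binomial coefficient is a rising factorial
`(x)_N = x(x+1)⋯(x+N-1)` divided by `N!`, and for `m + j < n` this turns the exact law into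
`P{X_{n,j} = m+1} = binom(m-b, m) · [(2b)_{n-m-1} / (1+b)_{n-m-1}] / [(2b)_{j-1} / (1+b)_{j-1}]
  · (n-m-j+1)_m / (n-m+b)_m`.
Euler's limit formula for `Γ` gives `(s)_N / (t)_N ~ Γ(t)/Γ(s) · N^(s-t)`, so the middle factor
behaves like `((n-m-1)/(j-1))^(b-1) → ρ^(1-b) = ρ^(k/(k+1))`; the last factor is a ratio of
polynomials of degree `m` in `n` with leading coefficients `(1-ρ)^m` and `1`.
-/

open Topology

theorem ascPochhammer_eval_eq_prod_range {R : Type*} [CommSemiring R] (n : ℕ) (r : R) :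
    (ascPochhammer R n).eval r = ∏ i ∈ Finset.range n, (r + i) := by
  induction n with
  | zero => simp
  | succ n ih => rw [ascPochhammer_succ_eval, ih, Finset.prod_range_succ]

theorem ascPochhammer_eval_mul_eval_add {R : Type*} [CommSemiring R] (a b : ℕ) (r : R) :
    (ascPochhammer R a).eval r * (ascPochhammer R b).eval (r + a) =
      (ascPochhammer R (a + b)).eval r := by
  simp only [ascPochhammer_eval_eq_prod_range, Finset.prod_range_add, Nat.cast_add, add_assoc]

theorem gbinom_eq_ascPochhammer (x : ℝ) (n : ℕ) :
    gbinom x n = (ascPochhammer ℝ n).eval (x - n + 1) / n.factorial := by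
  rw [gbinom, ← descPochhammer_eval_eq_prod_range, descPochhammer_eval_eq_ascPochhammer]

theorem tendsto_ascPochhammer_div_mul_rpow {s t : ℝ} (hs : 0 < s) (ht : 0 < t) :
    Tendsto (fun N : ℕ => (ascPochhammer ℝ N).eval s / (ascPochhammer ℝ N).eval t
      * (N : ℝ) ^ (t - s)) atTop (𝓝 (Real.Gamma t / Real.Gamma s)) := by
  have hshift : Tendsto (fun N : ℕ => (t + 1 * N) / (s + 1 * N)) atTop (𝓝 (1 / 1)) :=
    tendsto_add_mul_div_add_mul_atTop_nhds t s 1 one_ne_zero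
  rw [div_one] at hshift
  have hlim := ((Real.GammaSeq_tendsto_Gamma t).div (Real.GammaSeq_tendsto_Gamma s)
    (Real.Gamma_pos_of_pos hs).ne').mul hshift
  rw [mul_one] at hlim
  refine hlim.congr' ?_
  filter_upwards [eventually_ge_atTop 1] with N hN
  have hN0 : (0 : ℝ) < N := by exact_mod_cast hN
  have hsN := ascPochhammer_pos N s hs
  have htN := ascPochhammer_pos N t ht
  simp only [Pi.div_apply, Real.GammaSeq, ← ascPochhammer_eval_eq_prod_range,
    ascPochhammer_succ_eval, one_mul, Real.rpow_sub hN0]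
  field_simp

theorem tendsto_ascPochhammer_ratio_div_ratio {ι : Type*} {l : Filter ι} {s t r : ℝ}
    (hs : 0 < s) (ht : 0 < t) (hr : 0 < r) {M J : ι → ℕ} (hM : Tendsto M l atTop)
    (hJ : Tendsto J l atTop) (hMJ : Tendsto (fun i => (M i : ℝ) / J i) l (𝓝 r)) :
    Tendsto (fun i => (ascPochhammer ℝ (M i)).eval s / (ascPochhammer ℝ (M i)).eval t
      / ((ascPochhammer ℝ (J i)).eval s / (ascPochhammer ℝ (J i)).eval t)) l
      (𝓝 (r ^ (s - t))) := by
  have hΓ := tendsto_ascPochhammer_div_mul_rpow hs ht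
  have hΓ0 : Real.Gamma t / Real.Gamma s ≠ 0 :=
    (div_pos (Real.Gamma_pos_of_pos ht) (Real.Gamma_pos_of_pos hs)).ne'
  have hlim := ((hΓ.comp hM).div (hΓ.comp hJ) hΓ0).mul
    ((Real.continuousAt_rpow_const r (s - t) (Or.inl hr.ne')).tendsto.comp hMJ)
  rw [div_self hΓ0, one_mul] at hlim
  refine hlim.congr' ?_
  filter_upwards [hM.eventually_ge_atTop 1, hJ.eventually_ge_atTop 1] with i hMi hJi
  have hM0 : (0 : ℝ) < M i := by exact_mod_cast hMi
  have hJ0 : (0 : ℝ) < J i := by exact_mod_cast hJi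
  have := ascPochhammer_pos (M i) s hs
  have := ascPochhammer_pos (M i) t ht
  have := ascPochhammer_pos (J i) s hs
  have := ascPochhammer_pos (J i) t ht
  have := Real.rpow_pos_of_pos hM0 (s - t)
  have := Real.rpow_pos_of_pos hJ0 (s - t)
  simp only [Pi.div_apply, Function.comp_apply, Real.div_rpow hM0.le hJ0.le, ← neg_sub s t,
    Real.rpow_neg hM0.le, Real.rpow_neg hJ0.le]
  field_simp

theorem tendsto_ascPochhammer_eval_div_pow {ι : Type*} {l : Filter ι} {x u : ι → ℝ} {α : ℝ}
    (hu : Tendsto u l atTop) (hx : Tendsto (fun i => x i / u i) l (𝓝 α)) (m : ℕ) :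
    Tendsto (fun i => (ascPochhammer ℝ m).eval (x i) / u i ^ m) l (𝓝 (α ^ m)) := by
  have hterm (c : ℝ) : Tendsto (fun i => (x i + c) / u i) l (𝓝 α) := by
    simpa only [add_div, add_zero] using hx.add (tendsto_const_nhds.div_atTop hu)
  simpa only [ascPochhammer_eval_eq_prod_range, Finset.prod_div_distrib, Finset.prod_const,
    Finset.card_range] using tendsto_finsetProd (Finset.range m) fun i _ => hterm i

-- At `m + j = n` the truncated index `n - (m + 1) - j + 1` in `Pdesc` is `1`, not `0`.
theorem Pdesc_succ_eq_ascPochhammer {k n j m : ℕ} (hj : 1 ≤ j) (hjn : m + j < n) :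
    Pdesc k n j (m + 1) = gbinom ((m : ℝ) - 1 / ((k : ℝ) + 1)) m
      * ((ascPochhammer ℝ (n - m - j)).eval (2 / ((k : ℝ) + 1) + ↑(j - 1)) / (n - m - j).factorial)
      / ((ascPochhammer ℝ (n - j)).eval (1 + 1 / ((k : ℝ) + 1) + ↑(j - 1)) / (n - j).factorial) := by
  have cast_j1 : ((j - 1 : ℕ) : ℝ) = j - 1 := by rw [Nat.cast_sub hj, Nat.cast_one]
  rw [Pdesc, if_pos (by omega), Nat.add_sub_cancel, show n - (m + 1) - j + 1 = n - m - j by omega,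
    gbinom_eq_ascPochhammer _ (n - m - j), gbinom_eq_ascPochhammer _ (n - j),
    show ((m + 1 : ℕ) : ℝ) - 1 - 1 / ((k : ℝ) + 1) = m - 1 / (k + 1) by push_cast; ring,
    show (n : ℝ) - ↑(m + 1) - 1 + 2 / (k + 1) - ↑(n - m - j) + 1 = 2 / (k + 1) + ↑(j - 1) by
      rw [Nat.cast_sub (show j ≤ n - m by omega), Nat.cast_sub (show m ≤ n by omega), cast_j1]
      push_cast
      ring,
    show (n : ℝ) - k / (k + 1) - ↑(n - j) + 1 = 1 + 1 / (k + 1) + ↑(j - 1) by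
      rw [Nat.cast_sub (show j ≤ n by omega), cast_j1]
      field_simp
      ring]

theorem Pdesc_succ_eq {k n j m : ℕ} (hj : 1 ≤ j) (hjn : m + j < n) :
    Pdesc k n j (m + 1) = gbinom ((m : ℝ) - 1 / ((k : ℝ) + 1)) m
      * ((ascPochhammer ℝ (n - m - 1)).eval (2 / ((k : ℝ) + 1))
          / (ascPochhammer ℝ (n - m - 1)).eval (1 + 1 / ((k : ℝ) + 1))
        / ((ascPochhammer ℝ (j - 1)).eval (2 / ((k : ℝ) + 1))
          / (ascPochhammer ℝ (j - 1)).eval (1 + 1 / ((k : ℝ) + 1))))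
      * ((ascPochhammer ℝ m).eval ((n : ℝ) - m - j + 1)
        / (ascPochhammer ℝ m).eval ((n : ℝ) - m + 1 / ((k : ℝ) + 1))) := by
  have hsplit_num := ascPochhammer_eval_mul_eval_add (j - 1) (n - m - j) (2 / ((k : ℝ) + 1))
  have hsplit_den := ascPochhammer_eval_mul_eval_add (j - 1) (n - j) (1 + 1 / ((k : ℝ) + 1))
  have hsplit_top := ascPochhammer_eval_mul_eval_add (n - m - 1) m (1 + 1 / ((k : ℝ) + 1))
  have hsplit_fact := factorial_mul_ascPochhammer ℝ (n - m - j) m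
  rw [show j - 1 + (n - m - j) = n - m - 1 by omega] at hsplit_num
  rw [show n - m - j + m = n - j by omega, Nat.cast_sub (show j ≤ n - m by omega),
    Nat.cast_sub (show m ≤ n by omega)] at hsplit_fact
  rw [Nat.cast_sub (show 1 ≤ n - m by omega), Nat.cast_sub (show m ≤ n by omega), Nat.cast_one,
    show (1 : ℝ) + 1 / (k + 1) + (n - m - 1) = n - m + 1 / (k + 1) by ring] at hsplit_top
  rw [show j - 1 + (n - j) = n - m - 1 + m by omega, ← hsplit_top, mul_comm] at hsplit_den
  have hmjn : (m : ℝ) + j + 1 ≤ n := by exact_mod_cast hjn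
  have hb : 0 < 1 / ((k : ℝ) + 1) := by positivity
  have := ascPochhammer_pos (j - 1) _ (by positivity : 0 < 2 / ((k : ℝ) + 1))
  have hB1 := ascPochhammer_pos (j - 1) _ (by positivity : 0 < 1 + 1 / ((k : ℝ) + 1))
  have := ascPochhammer_pos (n - m - 1) _ (by positivity : 0 < 1 + 1 / ((k : ℝ) + 1))
  have := ascPochhammer_pos m ((n : ℝ) - m + 1 / (k + 1)) (by linarith)
  have := ascPochhammer_pos m ((n : ℝ) - m - j + 1) (by linarith)
  rw [Pdesc_succ_eq_ascPochhammer hj hjn, ← hsplit_num, ← hsplit_fact,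
    eq_div_of_mul_eq hB1.ne' hsplit_den]
  field_simp

theorem tendsto_natCast_add_div_natCast (c : ℝ) :
    Tendsto (fun n : ℕ => ((n : ℝ) + c) / n) atTop (𝓝 1) := by
  simpa [add_comm c] using tendsto_add_mul_div_add_mul_atTop_nhds c 0 1 one_ne_zero

section CentralRegime

variable {j : ℕ → ℕ} {ρ : ℝ} (hj : Tendsto (fun n : ℕ => (j n : ℝ) / n) atTop (𝓝 ρ))
include hj

theorem eventually_one_le_and_add_lt (hρ1 : ρ < 1) (hjinf : Tendsto j atTop atTop) (m : ℕ) :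
    ∀ᶠ n in atTop, 1 ≤ j n ∧ m + j n < n := by
  have hlim : Tendsto (fun n : ℕ => (j n : ℝ) / n + m / n) atTop (𝓝 (ρ + 0)) :=
    hj.add (tendsto_const_div_atTop_nhds_zero_nat _)
  rw [add_zero] at hlim
  filter_upwards [hjinf.eventually_ge_atTop 1, hlim.eventually (gt_mem_nhds hρ1),
    eventually_gt_atTop 0] with n hjn hlt hn
  refine ⟨hjn, ?_⟩
  have hn' : (0 : ℝ) < n := by exact_mod_cast hn
  rw [← add_div, div_lt_one hn'] at hlt
  exact_mod_cast (add_comm (m : ℝ) _ ▸ hlt)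

theorem tendsto_sub_div_sub (hρ0 : 0 < ρ) (hjinf : Tendsto j atTop atTop) (m : ℕ) :
    Tendsto (fun n => ((n - m - 1 : ℕ) : ℝ) / ((j n - 1 : ℕ) : ℝ)) atTop (𝓝 ρ⁻¹) := by
  have hlim := (tendsto_natCast_add_div_natCast (-(m + 1))).div
    (hj.sub (tendsto_const_div_atTop_nhds_zero_nat 1)) (by simpa using hρ0.ne')
  rw [sub_zero, one_div] at hlim
  refine hlim.congr' ?_
  filter_upwards [hjinf.eventually_ge_atTop 1, eventually_gt_atTop m] with n hjn hn
  simp only [Pi.div_apply]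
  rw [← sub_div, div_div_div_cancel_right₀ (Nat.cast_ne_zero.mpr (by omega)),
    Nat.cast_sub (by omega : 1 ≤ n - m), Nat.cast_sub hn.le, Nat.cast_sub hjn]
  push_cast
  ring

theorem tendsto_ascPochhammer_div_ascPochhammer (c : ℝ) (m : ℕ) :
    Tendsto (fun n : ℕ => (ascPochhammer ℝ m).eval ((n : ℝ) - m - j n + 1)
      / (ascPochhammer ℝ m).eval ((n : ℝ) - m + c)) atTop (𝓝 ((1 - ρ) ^ m)) := by
  have hnum : Tendsto (fun n : ℕ => ((n : ℝ) - m - j n + 1) / n) atTop (𝓝 (1 - ρ)) := by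
    refine ((tendsto_natCast_add_div_natCast (1 - m)).sub hj).congr fun n => ?_
    ring
  have hden : Tendsto (fun n : ℕ => ((n : ℝ) - m + c) / n) atTop (𝓝 1) := by
    refine (tendsto_natCast_add_div_natCast (c - m)).congr fun n => ?_
    ring
  have hlim := (tendsto_ascPochhammer_eval_div_pow tendsto_natCast_atTop_atTop hnum m).div
    (tendsto_ascPochhammer_eval_div_pow tendsto_natCast_atTop_atTop hden m) (by simp)
  rw [one_pow, div_one] at hlim
  refine hlim.congr' ?_
  filter_upwards [eventually_gt_atTop 0] with n hn
  exact div_div_div_cancel_right₀ (by positivity) _ _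

end CentralRegime

theorem ktree_descendants_central_general (k : ℕ) (j : ℕ → ℕ) (ρ : ℝ)
    (hρ0 : 0 < ρ) (hρ1 : ρ < 1)
    (hj : Tendsto (fun n : ℕ => (j n : ℝ) / n) atTop (nhds ρ))
    (hjinf : Tendsto j atTop atTop) (m : ℕ) :
    Tendsto (fun n : ℕ => Pdesc k n (j n) (m + 1)) atTop
      (nhds (gbinom ((m : ℝ) - 1 / ((k : ℝ) + 1)) m
        * ρ ^ ((k : ℝ) / ((k : ℝ) + 1)) * (1 - ρ) ^ m)) := by
  have hratio := tendsto_ascPochhammer_ratio_div_ratio (by positivity : (0 : ℝ) < 2 / (k + 1))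
    (by positivity : (0 : ℝ) < 1 + 1 / (k + 1)) (inv_pos.mpr hρ0)
    ((tendsto_sub_atTop_nat (m + 1)).congr fun n => by omega) ((tendsto_sub_atTop_nat 1).comp hjinf)
    (tendsto_sub_div_sub hj hρ0 hjinf m)
  have hexp : (ρ⁻¹) ^ (2 / ((k : ℝ) + 1) - (1 + 1 / (k + 1))) = ρ ^ ((k : ℝ) / (k + 1)) := by
    rw [Real.inv_rpow hρ0.le, ← Real.rpow_neg hρ0.le]
    congr 1
    field_simp
    ring
  rw [hexp] at hratio
  refine ((tendsto_const_nhds.mul hratio).mul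
    (tendsto_ascPochhammer_div_ascPochhammer hj (1 / ((k : ℝ) + 1)) m)).congr' ?_
  filter_upwards [eventually_one_le_and_add_lt hj hρ1 hjinf m] with n hn
  exact (Pdesc_succ_eq hn.1 hn.2).symm

/-- Central region: if `j(n)/n → ρ ∈ (0,1)`, then `X_{n,j} - 1` converges in
distribution to `NegBin(k/(k+1), ρ)`:
`P{X_{n,j} - 1 = m} → binom(m-1/(k+1), m) ρ^{k/(k+1)} (1-ρ)^m`. -/
theorem ktree_descendants_central (k : ℕ) (hk : 1 ≤ k) (j : ℕ → ℕ) (ρ : ℝ)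
    (hρ0 : 0 < ρ) (hρ1 : ρ < 1)
    (hj : Tendsto (fun n : ℕ => (j n : ℝ) / n) atTop (nhds ρ))
    (hjinf : Tendsto j atTop atTop) (m : ℕ) :
    Tendsto (fun n : ℕ => Pdesc k n (j n) (m + 1)) atTop
      (nhds (gbinom ((m : ℝ) - 1 / ((k : ℝ) + 1)) m
        * ρ ^ ((k : ℝ) / ((k : ℝ) + 1)) * (1 - ρ) ^ m)) :=
  ktree_descendants_central_general k j ρ hρ0 hρ1 hj hjinf m
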